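/- Let E be a real inner product space, f : E → ℝ with infimum value f* (so f(x) ≥ f* for all x), θ ∈ E, and let g_y, g_a ∈ E with g_y the gradient of f at θ. Set θ⁺ = θ − η(g_y + g_a) with step size η ≥ 0. Assume: (i) the smoothness inequality f(θ⁺) ≤ f(θ) − η⟪g_y, g_y + g_a⟫ + (βη²/2)‖g_y + g_a‖²; (ii) the Polyak–Łojasiewicz condition ‖g_y‖² ≥ 2μ(f(θ) − f*) with μ > 0; (iii) the alignment condition ⟪g_y, g_a⟫ ≥ ρ‖g_y‖² with ρ ≥ 0; (iv) the norm control ‖g_y + g_a‖² ≤ B_∇‖g_y‖²; and (v) 1 + ρ − βηB_∇/2 > 0. Then f(θ⁺) − f* ≤ [1 − 2ημ(1 + ρ − βηB_∇/2)] (f(θ) − f*). -/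

import Mathlib

/-!
Alignment gives `⟪g_y, g_y + g_a⟫ ≥ (1 + ρ)‖g_y‖²` and the norm control bounds the curvature
term by `βη²B_∇/2 ‖g_y‖²`, so the smoothness inequality yields the sufficient decrease
`f(θ⁺) ≤ f(θ) − η(1 + ρ − βηB_∇/2)‖g_y‖²`. The PL inequality then converts this decrease of
`‖g_y‖²` into a fixed fraction of the suboptimality gap `f(θ) − f*`.
-/

open RealInnerProductSpace

theorem one_add_mul_norm_sq_le_inner_add {E : Type*} [NormedAddCommGroup E]
    [InnerProductSpace ℝ E] {g a : E} {ρ : ℝ} (halign : ρ * ‖g‖ ^ 2 ≤ ⟪g, a⟫) :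
    (1 + ρ) * ‖g‖ ^ 2 ≤ ⟪g, g + a⟫ := by
  rw [inner_add_right, real_inner_self_eq_norm_sq]
  linarith

theorem le_sub_mul_norm_sq_of_aligned_step {E : Type*} [NormedAddCommGroup E]
    [InnerProductSpace ℝ E] {g a : E} {fθ fθ' η β ρ B : ℝ} (hη : 0 ≤ η) (hβ : 0 ≤ β)
    (hsmooth : fθ' ≤ fθ - η * ⟪g, g + a⟫ + β * η ^ 2 / 2 * ‖g + a‖ ^ 2)
    (halign : ρ * ‖g‖ ^ 2 ≤ ⟪g, a⟫) (hnorm : ‖g + a‖ ^ 2 ≤ B * ‖g‖ ^ 2) :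
    fθ' ≤ fθ - η * (1 + ρ - β * η * B / 2) * ‖g‖ ^ 2 := by
  have hdescent : η * ((1 + ρ) * ‖g‖ ^ 2) ≤ η * ⟪g, g + a⟫ :=
    mul_le_mul_of_nonneg_left (one_add_mul_norm_sq_le_inner_add halign) hη
  have hcurvature : β * η ^ 2 / 2 * ‖g + a‖ ^ 2 ≤ β * η ^ 2 / 2 * (B * ‖g‖ ^ 2) :=
    mul_le_mul_of_nonneg_left hnorm (by positivity)
  linarith

theorem sub_le_one_sub_mul_of_PL {fθ fθ' fstar k μ s : ℝ} (hk : 0 ≤ k)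
    (hdecrease : fθ' ≤ fθ - k * s) (hPL : 2 * μ * (fθ - fstar) ≤ s) :
    fθ' - fstar ≤ (1 - 2 * k * μ) * (fθ - fstar) := by
  linarith [mul_le_mul_of_nonneg_left hPL hk]

theorem aligned_auxiliary_gradient_contraction_general
    {E : Type*} [NormedAddCommGroup E] [InnerProductSpace ℝ E]
    (f : E → ℝ) (fstar : ℝ)
    (θ gy ga : E) (η β μ ρ B : ℝ)
    (hη : 0 ≤ η) (hβ : 0 < β)
    -- (i) smoothness inequality along the update
    (hsmooth : f (θ - η • (gy + ga)) ≤
      f θ - η * ⟪gy, gy + ga⟫ + β * η ^ 2 / 2 * ‖gy + ga‖ ^ 2)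
    -- (ii) Polyak–Łojasiewicz condition
    (hPL : 2 * μ * (f θ - fstar) ≤ ‖gy‖ ^ 2)
    -- (iii) alignment condition
    (halign : ρ * ‖gy‖ ^ 2 ≤ ⟪gy, ga⟫)
    -- (iv) norm control
    (hnorm : ‖gy + ga‖ ^ 2 ≤ B * ‖gy‖ ^ 2)
    -- (v) step-size condition
    (hstep : 0 < 1 + ρ - β * η * B / 2) :
    f (θ - η • (gy + ga)) - fstar ≤
      (1 - 2 * η * μ * (1 + ρ - β * η * B / 2)) * (f θ - fstar) := by
  have hdecrease := le_sub_mul_norm_sq_of_aligned_step hη hβ.le hsmooth halign hnorm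
  linarith [sub_le_one_sub_mul_of_PL (mul_nonneg hη hstep.le) hdecrease hPL]

theorem aligned_auxiliary_gradient_contraction
    {E : Type*} [NormedAddCommGroup E] [InnerProductSpace ℝ E] [CompleteSpace E]
    (f : E → ℝ) (fstar : ℝ) (hfstar : ∀ x : E, fstar ≤ f x)
    (θ gy ga : E) (η β μ ρ B : ℝ)
    (hη : 0 ≤ η) (hβ : 0 < β) (hμ : 0 < μ) (hρ : 0 ≤ ρ) (hB : 0 < B)
    (hgrad : gradient f θ = gy)
    -- (i) smoothness inequality along the update
    (hsmooth : f (θ - η • (gy + ga)) ≤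
      f θ - η * ⟪gy, gy + ga⟫ + β * η ^ 2 / 2 * ‖gy + ga‖ ^ 2)
    -- (ii) Polyak–Łojasiewicz condition
    (hPL : 2 * μ * (f θ - fstar) ≤ ‖gy‖ ^ 2)
    -- (iii) alignment condition
    (halign : ρ * ‖gy‖ ^ 2 ≤ ⟪gy, ga⟫)
    -- (iv) norm control
    (hnorm : ‖gy + ga‖ ^ 2 ≤ B * ‖gy‖ ^ 2)
    -- (v) step-size condition
    (hstep : 0 < 1 + ρ - β * η * B / 2) :
    f (θ - η • (gy + ga)) - fstar ≤
      (1 - 2 * η * μ * (1 + ρ - β * η * B / 2)) * (f θ - fstar) :=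
  aligned_auxiliary_gradient_contraction_general f fstar θ gy ga η β μ ρ B hη hβ hsmooth hPL halign
    hnorm hstep
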